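/- For every nonnegative integer n, the operator T_2 = Σ_{i=1}^N z_i² ∂_i² + 2a Σ_{i=1}^N (z_i − z_{i+1})^{-1}(z_i² ∂_i − z_{i+1}² ∂_{i+1}) − 2a Σ_{i=1}^N z_i z_{i+1} (z_i − z_{i+1})^{-2}(1 − K_{i,i+1}) leaves invariant the space 𝒮_2^n consisting of those polynomials in z_1,…,z_N of total degree at most n that can be written as a polynomial in σ_1, τ_{N−1}, τ_N which is of degree at most 1 in σ_1 and of degree at most 1 in τ_{N−1}; that is, for f ∈ 𝒮_2^n the rational function T_2 f is again a polynomial lying in 𝒮_2^n. -/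

import Mathlib

noncomputable section

open MvPolynomial

/-- Polynomials in `N` variables over `ℂ`. -/
abbrev MvP (N : ℕ) : Type := MvPolynomial (Fin N) ℂ

/-- The canonical embedding of polynomials into the field of rational functions. -/
noncomputable def phi (N : ℕ) : MvP N →+* FractionRing (MvP N) :=
  algebraMap (MvP N) (FractionRing (MvP N))

/-- The power sum `σ_k = ∑ i, z_i ^ k`. -/
def sig (N k : ℕ) : MvP N := ∑ i : Fin N, X i ^ k

/-- The top elementary symmetric polynomial `τ_N = ∏ i, z_i`. -/
def tauTop (N : ℕ) : MvP N := ∏ i : Fin N, X i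

/-- The elementary symmetric polynomial `τ_{N-1} = ∑ i, ∏_{j ≠ i} z_j`. -/
def tauSub (N : ℕ) : MvP N := ∑ i : Fin N, ∏ j ∈ Finset.univ.erase i, X j

/-- The operator
`T_2 = ∑ i z_i² ∂_i² + 2a ∑ i (z_i - z_{i+1})⁻¹ (z_i² ∂_i - z_{i+1}² ∂_{i+1})
  - 2a ∑ i z_i z_{i+1} (z_i - z_{i+1})⁻² (1 - K_{i,i+1})`
(indices cyclic, `K_{i,i+1}` exchanging the variables `z_i` and `z_{i+1}`),
computed in the field of rational functions. -/
noncomputable def T2op (N : ℕ) [NeZero N] (a : ℝ) (f : MvP N) : FractionRing (MvP N) :=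
  (∑ i : Fin N, phi N (X i ^ 2 * pderiv i (pderiv i f)))
  + phi N (C ((2 * a : ℝ) : ℂ)) *
      ∑ i : Fin N, (phi N (X i - X (i + 1)))⁻¹ *
        phi N (X i ^ 2 * pderiv i f - X (i + 1) ^ 2 * pderiv (i + 1) f)
  - phi N (C ((2 * a : ℝ) : ℂ)) *
      ∑ i : Fin N, phi N (X i * X (i + 1)) * ((phi N (X i - X (i + 1)))⁻¹) ^ 2 *
        phi N (f - rename (Equiv.swap i (i + 1)) f)

/-- Membership in the space `𝒮_2^n`: polynomials of total degree at most `n` expressible as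
a polynomial in `σ_1, τ_{N-1}, τ_N` of degree at most `1` in `σ_1` and at most `1`
in `τ_{N-1}`. -/
def S2mem (N n : ℕ) (f : MvP N) : Prop :=
  f.totalDegree ≤ n ∧
    ∃ F : MvPolynomial (Fin 3) ℂ, F.degreeOf 0 ≤ 1 ∧ F.degreeOf 1 ≤ 1 ∧
      f = aeval ![sig N 1, tauSub N, tauTop N] F

set_option linter.unusedSectionVars false
set_option maxHeartbeats 1000000

namespace Stmt5Aux

def vN (N : ℕ) : Fin 3 → MvP N := ![sig N 1, tauSub N, tauTop N]
def Pv (N : ℕ) (F : MvPolynomial (Fin 3) ℂ) (k : Fin 3) : MvP N := aeval (vN N) (pderiv k F)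
def Dv (N : ℕ) (F : MvPolynomial (Fin 3) ℂ) (k l : Fin 3) : MvP N :=
  aeval (vN N) (pderiv l (pderiv k F))
def wsum (N : ℕ) (d : Fin 3 →₀ ℕ) : ℕ := d 0 * 1 + d 1 * (N - 1) + d 2 * N
def Rmid (N : ℕ) (F : MvPolynomial (Fin 3) ℂ) (i j : Fin N) : MvP N :=
  (X i + X j) * Pv N F 0 + tauSub N * Pv N F 1 + tauTop N * Pv N F 2

variable {N : ℕ} [NeZero N]

/-- derivative of a product of distinct variables -/
lemma pderiv_prod_X (i : Fin N) (s : Finset (Fin N)) :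
    pderiv i (∏ j ∈ s, X j : MvP N) =
      if i ∈ s then ∏ j ∈ s.erase i, X j else 0 := by
  induction s using Finset.induction with
  | empty => simp [pderiv_one]
  | insert _ _ hns ih =>
    rename_i b t
    rw [Finset.prod_insert hns, pderiv_mul, ih]
    by_cases hib : i = b
    · subst hib
      simp [Finset.erase_insert hns, hns]
    · rw [pderiv_X_of_ne (Ne.symm hib)]
      by_cases his : i ∈ t
      · simp only [his, if_pos (Finset.mem_insert_of_mem his), zero_mul, add_zero, if_true]
        rw [Finset.erase_insert_of_ne (Ne.symm hib), Finset.prod_insert (by simp [hns])]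
        ring
      · simp [his, Finset.mem_insert, hib]

lemma pderiv_sig (i : Fin N) : pderiv i (sig N 1) = 1 := by
  unfold sig
  rw [map_sum]
  rw [Finset.sum_eq_single i]
  · simp
  · intro b _ hb; simp [pderiv_X_of_ne hb]
  · simp

lemma pderiv_tauTop (i : Fin N) :
    pderiv i (tauTop N) = ∏ j ∈ Finset.univ.erase i, X j := by
  unfold tauTop; rw [pderiv_prod_X]; simp

lemma X_mul_pderiv_tauTop (i : Fin N) : X i * pderiv i (tauTop N) = tauTop N := by
  rw [pderiv_tauTop]; exact Finset.mul_prod_erase _ _ (Finset.mem_univ i)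

lemma pderiv_tauSub (i : Fin N) :
    pderiv i (tauSub N) =
      ∑ j ∈ Finset.univ.erase i, ∏ k ∈ (Finset.univ.erase j).erase i, X k := by
  unfold tauSub
  rw [map_sum]
  rw [← Finset.sum_erase_add _ _ (Finset.mem_univ i)]
  have h1 : pderiv i (∏ j ∈ Finset.univ.erase i, X j : MvP N) = 0 := by
    rw [pderiv_prod_X]; simp
  rw [h1, add_zero]
  refine Finset.sum_congr rfl fun j hj => ?_
  rw [pderiv_prod_X]
  rw [if_pos]
  simp only [Finset.mem_erase, Finset.mem_univ, and_true]
  exact fun h => (Finset.mem_erase.mp hj).1 h.symm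

lemma X_mul_pderiv_tauSub (i : Fin N) :
    X i * pderiv i (tauSub N) = tauSub N - pderiv i (tauTop N) := by
  rw [pderiv_tauSub, pderiv_tauTop, Finset.mul_sum]
  have : ∀ j ∈ Finset.univ.erase i,
      X i * ∏ k ∈ (Finset.univ.erase j).erase i, X k = ∏ k ∈ Finset.univ.erase j, (X k : MvP N) := by
    intro j hj
    refine Finset.mul_prod_erase _ _ ?_
    simp only [Finset.mem_erase, Finset.mem_univ, and_true]
    exact fun h => (Finset.mem_erase.mp hj).1 h.symm
  rw [Finset.sum_congr rfl this]
  unfold tauSub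
  rw [eq_sub_iff_add_eq, Finset.sum_erase_add _ _ (Finset.mem_univ i)]

lemma pderiv_pderiv_tauTop (i : Fin N) : pderiv i (pderiv i (tauTop N)) = 0 := by
  rw [pderiv_tauTop, pderiv_prod_X]; simp

lemma pderiv_pderiv_tauSub (i : Fin N) : pderiv i (pderiv i (tauSub N)) = 0 := by
  rw [pderiv_tauSub, map_sum]
  refine Finset.sum_eq_zero fun j hj => ?_
  rw [pderiv_prod_X]; simp

lemma pderiv_pderiv_sig (i : Fin N) : pderiv i (pderiv i (sig N 1)) = 0 := by
  rw [pderiv_sig, pderiv_one]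

lemma sum_pp : ∑ i : Fin N, pderiv i (tauTop N) = tauSub N := by
  unfold tauSub; exact Finset.sum_congr rfl fun i _ => pderiv_tauTop i

lemma sum_X : ∑ i : Fin N, (X i : MvP N) = sig N 1 := by
  unfold sig; simp

lemma sum_X_mul_pp : ∑ i : Fin N, (X i : MvP N) * pderiv i (tauTop N) = N • tauTop N := by
  rw [Finset.sum_congr rfl fun i _ => X_mul_pderiv_tauTop i]
  simp


/-- chain rule for `aeval` -/
lemma chain (v : Fin 3 → MvP N) (F : MvPolynomial (Fin 3) ℂ) (i : Fin N) :
    pderiv i (aeval v F) = ∑ k : Fin 3, aeval v (pderiv k F) * pderiv i (v k) := by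
  induction F using MvPolynomial.induction_on with
  | C c => simp
  | add p q hp hq =>
    simp only [map_add, hp, hq, add_mul, Finset.sum_add_distrib]
  | mul_X p k hp =>
    simp only [map_mul, aeval_X, pderiv_mul, hp, map_add, add_mul, Finset.sum_add_distrib,
      Finset.sum_mul]
    congr 1
    · exact Finset.sum_congr rfl fun l _ => by ring
    · rw [Finset.sum_eq_single k]
      · simp
      · intro l _ hl
        rw [pderiv_X_of_ne (Ne.symm hl)]
        simp
      · simp

lemma coeff_pderiv (j : Fin 3) (P : MvPolynomial (Fin 3) ℂ) (m : Fin 3 →₀ ℕ) :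
    coeff m (pderiv j P) = coeff (m + Finsupp.single j 1) P * (m j + 1 : ℕ) := by
  induction P using MvPolynomial.induction_on' with
  | add p q hp hq => simp [hp, hq, add_mul]
  | monomial d c =>
    rw [pderiv_monomial, coeff_monomial, coeff_monomial]
    by_cases h : d = m + Finsupp.single j 1
    · subst h
      rw [if_pos]
      · simp only [Finsupp.add_apply, Finsupp.single_eq_same, if_pos rfl]
        push_cast
        ring
      · ext l
        rw [Finsupp.tsub_apply]
        by_cases hl : l = j
        · subst hl; simp
        · simp [Finsupp.single_eq_of_ne (Ne.symm hl)]
    · rw [if_neg h, zero_mul]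
      by_cases h2 : d - Finsupp.single j 1 = m
      · by_cases h3 : d j = 0
        · simp [h3]
        · exfalso
          apply h
          ext l
          by_cases hl : l = j
          · subst hl
            simp only [Finsupp.add_apply, Finsupp.single_eq_same]
            rw [← h2, Finsupp.tsub_apply, Finsupp.single_eq_same]
            omega
          · rw [← h2, Finsupp.add_apply, Finsupp.tsub_apply]
            simp [Finsupp.single_eq_of_ne hl]
      · simp [h2]

lemma mem_support_pderiv {j : Fin 3} {P : MvPolynomial (Fin 3) ℂ} {m : Fin 3 →₀ ℕ}
    (h : m ∈ (pderiv j P).support) : m + Finsupp.single j 1 ∈ P.support := by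
  rw [mem_support_iff] at h ⊢
  rw [coeff_pderiv] at h
  exact fun hc => h (by rw [hc, zero_mul])

lemma degreeOf_pderiv_le (j k : Fin 3) (P : MvPolynomial (Fin 3) ℂ) :
    degreeOf k (pderiv j P) ≤ degreeOf k P := by
  rw [degreeOf_le_iff]
  intro m hm
  have h2 := Finset.le_sup (f := fun s => s k) (mem_support_pderiv hm)
  rw [← degreeOf_eq_sup] at h2
  simp only [Finsupp.add_apply] at h2
  omega

lemma degreeOf_pderiv_self {j : Fin 3} {P : MvPolynomial (Fin 3) ℂ}
    (h : degreeOf j P ≤ 1) : degreeOf j (pderiv j P) = 0 := by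
  refine Nat.le_zero.mp ?_
  rw [degreeOf_le_iff]
  intro m hm
  have h2 := Finset.le_sup (f := fun s => s j) (mem_support_pderiv hm)
  rw [← degreeOf_eq_sup] at h2
  simp only [Finsupp.add_apply, Finsupp.single_eq_same] at h2
  omega

lemma pderiv_pderiv_self {j : Fin 3} {P : MvPolynomial (Fin 3) ℂ}
    (h : degreeOf j P ≤ 1) : pderiv j (pderiv j P) = 0 := by
  ext m
  rw [coeff_pderiv, coeff_pderiv, coeff_zero]
  have hz : coeff (m + Finsupp.single j 1 + Finsupp.single j 1) P = 0 := by
    by_contra hc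
    have h2 := Finset.le_sup (f := fun s => s j) (mem_support_iff.mpr hc)
    rw [← degreeOf_eq_sup] at h2
    simp only [Finsupp.add_apply, Finsupp.single_eq_same] at h2
    omega
  rw [hz, zero_mul, zero_mul]


lemma rename_sig (e : Equiv.Perm (Fin N)) : rename e (sig N 1) = sig N 1 := by
  unfold sig
  rw [map_sum]
  simp only [map_pow, rename_X]
  exact Fintype.sum_equiv e _ _ fun i => rfl

lemma rename_tauTop (e : Equiv.Perm (Fin N)) : rename e (tauTop N) = tauTop N := by
  unfold tauTop
  rw [map_prod]
  simp only [rename_X]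
  exact Fintype.prod_equiv e _ _ fun i => rfl

lemma rename_tauSub (e : Equiv.Perm (Fin N)) : rename e (tauSub N) = tauSub N := by
  unfold tauSub
  rw [map_sum]
  refine Fintype.sum_equiv e _ _ fun i => ?_
  rw [map_prod]
  simp only [rename_X]
  refine Finset.prod_nbij' e e.symm ?_ ?_ ?_ ?_ ?_
  · intro a ha
    simp only [Finset.mem_erase, Finset.mem_univ, and_true] at ha ⊢
    exact fun h => ha (e.injective h)
  · intro a ha
    simp only [Finset.mem_erase, Finset.mem_univ, and_true] at ha ⊢
    intro h
    apply ha
    rw [← h]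
    simp
  · intro a _; simp
  · intro a _; simp
  · intro a _; rfl

lemma rename_aeval3 (e : Equiv.Perm (Fin N)) (F : MvPolynomial (Fin 3) ℂ) :
    rename e (aeval (vN N) F) = aeval (vN N) F := by
  have h1 : (fun i => rename (R := ℂ) e (vN N i)) = vN N := by
    funext k
    fin_cases k <;>
      simp [vN, rename_sig e, rename_tauSub e, rename_tauTop e]
  have := congrFun (congrArg (fun (φ : MvPolynomial (Fin 3) ℂ →ₐ[ℂ] MvP N) => φ.toFun)
    (comp_aeval (B := MvP N) (vN N) (rename e))) F
  simp only [AlgHom.toFun_eq_coe, AlgHom.coe_comp, Function.comp_apply] at this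
  rw [this, h1]

lemma X_sub_X_ne (hN : 3 ≤ N) (i : Fin N) : (X i - X (i+1) : MvP N) ≠ 0 := by
  have hne : i ≠ i + 1 := by
    intro h
    have : (1 : Fin N) = 0 := by
      have := congrArg (fun x => x - i) h
      simpa [sub_self, add_sub_cancel_left] using this.symm
    rw [Fin.one_eq_zero_iff] at this
    omega
  rw [sub_ne_zero]
  exact fun h => hne (X_injective h)



lemma wsum_add (d e : Fin 3 →₀ ℕ) : wsum N (d + e) = wsum N d + wsum N e := by
  simp only [wsum, Finsupp.add_apply]; ring

lemma h_sig : (sig N 1).IsHomogeneous 1 := by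
  unfold sig
  exact IsHomogeneous.sum _ _ _ fun i _ => by simpa using isHomogeneous_X ℂ i

lemma h_tauTop : (tauTop N).IsHomogeneous N := by
  unfold tauTop
  have := IsHomogeneous.prod Finset.univ (fun i : Fin N => (X i : MvP N)) (fun _ => 1)
    (fun i _ => isHomogeneous_X ℂ i)
  simpa using this

lemma h_tauSub : (tauSub N).IsHomogeneous (N - 1) := by
  unfold tauSub
  refine IsHomogeneous.sum _ _ _ fun i _ => ?_
  have := IsHomogeneous.prod (Finset.univ.erase i) (fun j : Fin N => (X j : MvP N)) (fun _ => 1)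
    (fun j _ => isHomogeneous_X ℂ j)
  simpa [Finset.card_erase_of_mem] using this

lemma hom_mono (d : Fin 3 →₀ ℕ) (c : ℂ) :
    (aeval (vN N) (monomial d c)).IsHomogeneous (wsum N d) := by
  rw [aeval_monomial, Finsupp.prod_pow, Fin.prod_univ_three]
  have hw : wsum N d = 0 + (1 * d 0 + (N - 1) * d 1 + N * d 2) := by
    simp only [wsum]; ring
  rw [hw]
  have h0 : ((algebraMap ℂ (MvP N)) c).IsHomogeneous 0 := isHomogeneous_C _ _
  refine h0.mul ?_
  have h1 : (vN N 0).IsHomogeneous 1 := by simpa [vN] using h_sig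
  have h2 : (vN N 1).IsHomogeneous (N - 1) := by simpa [vN] using h_tauSub
  have h3 : (vN N 2).IsHomogeneous N := by simpa [vN] using h_tauTop
  exact ((h1.pow _).mul (h2.pow _)).mul (h3.pow _)

lemma tdeg_mono (d : Fin 3 →₀ ℕ) (c : ℂ) :
    (aeval (vN N) (monomial d c)).totalDegree ≤ wsum N d :=
  (hom_mono d c).totalDegree_le

/-- decomposition: cut off the high-weight part of `F`, not changing `aeval`. -/
lemma decompose (n : ℕ) (F : MvPolynomial (Fin 3) ℂ)
    (hdeg : (aeval (vN N) F).totalDegree ≤ n) :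
    ∃ F' : MvPolynomial (Fin 3) ℂ,
      aeval (vN N) F' = aeval (vN N) F ∧
      F'.support ⊆ F.support ∧
      (∀ d ∈ F'.support, wsum N d ≤ n) := by
  classical
  set M := (F.support.sup (wsum N)) + 1 with hM
  set Fw : ℕ → MvPolynomial (Fin 3) ℂ :=
    fun w => ∑ d ∈ F.support.filter (fun d => wsum N d = w), monomial d (coeff d F) with hFw
  have hsum : ∑ w ∈ Finset.range M, Fw w = F := by
    rw [hFw]
    rw [Finset.sum_fiberwise_of_maps_to (fun d hd => Finset.mem_range.mpr
      (Nat.lt_succ_of_le (Finset.le_sup hd)))]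
    exact support_sum_monomial_coeff F
  have hhom : ∀ w, (aeval (vN N) (Fw w)).IsHomogeneous w := by
    intro w
    rw [hFw]
    rw [map_sum]
    refine IsHomogeneous.sum _ _ _ fun d hd => ?_
    have := (Finset.mem_filter.mp hd).2
    rw [← this]
    exact hom_mono d _
  have hzero : ∀ w ∈ Finset.range M, n < w → aeval (vN N) (Fw w) = 0 := by
    intro w hw hnw
    have h1 : homogeneousComponent w (aeval (vN N) F) = 0 :=
      homogeneousComponent_eq_zero _ _ (lt_of_le_of_lt hdeg hnw)
    have h2 : aeval (vN N) F = ∑ u ∈ Finset.range M, aeval (vN N) (Fw u) := by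
      rw [← hsum]; rw [map_sum]
    rw [h2, map_sum] at h1
    have h3 : ∀ u ∈ Finset.range M,
        homogeneousComponent w (aeval (vN N) (Fw u)) = if w = u then aeval (vN N) (Fw u) else 0 :=
      fun u _ => homogeneousComponent_of_mem (hhom u)
    rw [Finset.sum_congr rfl h3, Finset.sum_ite_eq _ w (fun u => aeval (vN N) (Fw u)),
      if_pos hw] at h1
    exact h1
  have hmem : ∀ d ∈ (∑ w ∈ (Finset.range M).filter (fun w => w ≤ n), Fw w).support,
      d ∈ F.support ∧ wsum N d ≤ n := by
    intro d hd
    have h5 := support_sum hd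
    rw [Finset.mem_biUnion] at h5
    obtain ⟨w, hw, hdw⟩ := h5
    rw [hFw] at hdw
    have h6 := support_sum hdw
    rw [Finset.mem_biUnion] at h6
    obtain ⟨e, he, hde⟩ := h6
    classical
    rw [support_monomial] at hde
    have hd_eq : d = e := by
      by_cases hc : coeff e F = 0
      · rw [if_pos hc] at hde; exact absurd hde (Finset.notMem_empty d)
      · rw [if_neg hc] at hde; exact Finset.mem_singleton.mp hde
    subst hd_eq
    have h7 := Finset.mem_filter.mp he
    have h8 := Finset.mem_filter.mp hw
    exact ⟨h7.1, by omega⟩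
  refine ⟨∑ w ∈ (Finset.range M).filter (fun w => w ≤ n), Fw w, ?_, fun d hd => (hmem d hd).1,
    fun d hd => (hmem d hd).2⟩
  rw [map_sum]
  have hsplit := Finset.sum_filter_add_sum_filter_not (Finset.range M) (fun w => w ≤ n)
    (fun w => aeval (vN N) (Fw w))
  have hz2 : ∑ w ∈ (Finset.range M).filter (fun w => ¬ w ≤ n), aeval (vN N) (Fw w) = 0 := by
    refine Finset.sum_eq_zero fun w hw => ?_
    have h4 := Finset.mem_filter.mp hw
    exact hzero w h4.1 (by omega)
  conv_rhs => rw [← hsum]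
  rw [map_sum, ← hsplit, hz2, add_zero]


section identities
variable (F : MvPolynomial (Fin 3) ℂ)

lemma vN0 : vN N 0 = sig N 1 := rfl
lemma vN1 : vN N 1 = tauSub N := rfl
lemma vN2 : vN N 2 = tauTop N := rfl

lemma deriv1 (i : Fin N) :
    pderiv i (aeval (vN N) F) =
      Pv N F 0 + Pv N F 1 * pderiv i (tauSub N) + Pv N F 2 * pderiv i (tauTop N) := by
  rw [chain, Fin.sum_univ_three, vN0, vN1, vN2, pderiv_sig]
  unfold Pv
  ring

lemma deriv2 (hF0 : F.degreeOf 0 ≤ 1) (hF1 : F.degreeOf 1 ≤ 1) (i : Fin N) :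
    X i ^ 2 * pderiv i (pderiv i (aeval (vN N) F)) =
      (Dv N F 0 1 + Dv N F 1 0) * (X i * tauSub N - tauTop N)
      + (Dv N F 0 2 + Dv N F 2 0) * (X i * tauTop N)
      + (Dv N F 1 2 + Dv N F 2 1) * ((tauSub N - pderiv i (tauTop N)) * tauTop N)
      + Dv N F 2 2 * (tauTop N) ^ 2 := by
  rw [deriv1]
  rw [map_add, map_add, pderiv_mul, pderiv_mul]
  unfold Pv
  rw [chain (vN N) (pderiv 0 F) i, chain (vN N) (pderiv 1 F) i, chain (vN N) (pderiv 2 F) i]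
  rw [Fin.sum_univ_three, Fin.sum_univ_three, Fin.sum_univ_three, vN0, vN1, vN2, pderiv_sig,
    pderiv_pderiv_tauSub, pderiv_pderiv_tauTop]
  have hD00 : aeval (vN N) (pderiv 0 (pderiv 0 F)) = 0 := by
    rw [pderiv_pderiv_self hF0, map_zero]
  have hD11 : aeval (vN N) (pderiv 1 (pderiv 1 F)) = 0 := by
    rw [pderiv_pderiv_self hF1, map_zero]
  rw [hD00, hD11]
  unfold Dv
  have hq := X_mul_pderiv_tauSub i
  have hp := X_mul_pderiv_tauTop i
  set q := pderiv i (tauSub N)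
  set p := pderiv i (tauTop N)
  set D01 := aeval (vN N) (pderiv 1 (pderiv 0 F))
  set D10 := aeval (vN N) (pderiv 0 (pderiv 1 F))
  set D02 := aeval (vN N) (pderiv 2 (pderiv 0 F))
  set D20 := aeval (vN N) (pderiv 0 (pderiv 2 F))
  set D12 := aeval (vN N) (pderiv 2 (pderiv 1 F))
  set D21 := aeval (vN N) (pderiv 1 (pderiv 2 F))
  set D22 := aeval (vN N) (pderiv 2 (pderiv 2 F))
  linear_combination (X i * (D01 + D10) + tauTop N * (D12 + D21)) * hq
    + (-(D01 + D10) + X i * (D02 + D20) + (X i * q) * (D12 + D21)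
        + (X i * p + tauTop N) * D22) * hp

lemma sumI1 (hF0 : F.degreeOf 0 ≤ 1) (hF1 : F.degreeOf 1 ≤ 1) :
    ∑ i : Fin N, X i ^ 2 * pderiv i (pderiv i (aeval (vN N) F)) =
      (Dv N F 0 1 + Dv N F 1 0) * (sig N 1 * tauSub N - C (N : ℂ) * tauTop N)
      + (Dv N F 0 2 + Dv N F 2 0) * (sig N 1 * tauTop N)
      + (Dv N F 1 2 + Dv N F 2 1) * ((C (N : ℂ) - 1) * tauSub N * tauTop N)
      + Dv N F 2 2 * (C (N : ℂ) * tauTop N ^ 2) := by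
  have hNc : (C (N : ℂ) : MvP N) = ((N : ℕ) : MvP N) := by
    rw [map_natCast]
  rw [Finset.sum_congr rfl fun i _ => deriv2 F hF0 hF1 i]
  rw [Finset.sum_add_distrib, Finset.sum_add_distrib, Finset.sum_add_distrib]
  rw [← Finset.mul_sum, ← Finset.mul_sum, ← Finset.mul_sum, ← Finset.mul_sum]
  have e1 : ∑ i : Fin N, (X i * tauSub N - tauTop N) =
      sig N 1 * tauSub N - C (N : ℂ) * tauTop N := by
    rw [Finset.sum_sub_distrib, ← Finset.sum_mul, sum_X, Finset.sum_const, Finset.card_univ,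
      Fintype.card_fin, hNc, nsmul_eq_mul]
  have e2 : ∑ i : Fin N, (X i * tauTop N) = sig N 1 * tauTop N := by
    rw [← Finset.sum_mul, sum_X]
  have e3 : ∑ i : Fin N, ((tauSub N - pderiv i (tauTop N)) * tauTop N) =
      (C (N : ℂ) - 1) * tauSub N * tauTop N := by
    rw [← Finset.sum_mul, Finset.sum_sub_distrib, sum_pp, Finset.sum_const, Finset.card_univ,
      Fintype.card_fin, hNc, nsmul_eq_mul]
    ring
  have e4 : ∑ _i : Fin N, (tauTop N) ^ 2 = C (N : ℂ) * tauTop N ^ 2 := by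
    rw [Finset.sum_const, Finset.card_univ, Fintype.card_fin, hNc, nsmul_eq_mul]
  rw [e1, e2, e3, e4]

lemma midI2 (i j : Fin N) :
    X i ^ 2 * pderiv i (aeval (vN N) F) - X j ^ 2 * pderiv j (aeval (vN N) F) =
      (X i - X j) * Rmid N F i j := by
  rw [deriv1, deriv1]
  unfold Rmid
  have hqi := X_mul_pderiv_tauSub i
  have hpi := X_mul_pderiv_tauTop i
  have hqj := X_mul_pderiv_tauSub j
  have hpj := X_mul_pderiv_tauTop j
  set P0 := Pv N F 0
  set P1 := Pv N F 1
  set P2 := Pv N F 2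
  linear_combination (P1 * X i) * hqi - (P1 * X j) * hqj
    + (P2 * X i - P1) * hpi + (P1 - P2 * X j) * hpj

lemma sumI3 :
    ∑ i : Fin N, Rmid N F i (i + 1) =
      2 * sig N 1 * Pv N F 0 + C (N : ℂ) * tauSub N * Pv N F 1
        + C (N : ℂ) * tauTop N * Pv N F 2 := by
  have hNc : (C (N : ℂ) : MvP N) = ((N : ℕ) : MvP N) := by rw [map_natCast]
  unfold Rmid
  rw [Finset.sum_add_distrib, Finset.sum_add_distrib]
  have e1 : ∑ i : Fin N, (X i + X (i + 1)) * Pv N F 0 = 2 * sig N 1 * Pv N F 0 := by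
    rw [← Finset.sum_mul, Finset.sum_add_distrib, sum_X]
    have : ∑ i : Fin N, (X (i + 1) : MvP N) = sig N 1 := by
      rw [← sum_X (N := N)]
      exact Fintype.sum_equiv (Equiv.addRight 1) _ _ fun i => rfl
    rw [this]; ring
  have e2 : ∑ _i : Fin N, tauSub N * Pv N F 1 = C (N : ℂ) * tauSub N * Pv N F 1 := by
    rw [Finset.sum_const, Finset.card_univ, Fintype.card_fin, hNc, nsmul_eq_mul]; ring
  have e3 : ∑ _i : Fin N, tauTop N * Pv N F 2 = C (N : ℂ) * tauTop N * Pv N F 2 := by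
    rw [Finset.sum_const, Finset.card_univ, Fintype.card_fin, hNc, nsmul_eq_mul]; ring
  rw [e1, e2, e3]

end identities

/-- the polynomial operator on `Fin 3` polynomials implementing `T₂`. -/
def LL (N : ℕ) (a : ℝ) (F : MvPolynomial (Fin 3) ℂ) : MvPolynomial (Fin 3) ℂ :=
  monomial (Finsupp.single 0 1 + Finsupp.single 1 1) 1 * pderiv 1 (pderiv 0 F)
  + monomial (Finsupp.single 0 1 + Finsupp.single 1 1) 1 * pderiv 0 (pderiv 1 F)
  + monomial (Finsupp.single 2 1) (-(N : ℂ)) * pderiv 1 (pderiv 0 F)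
  + monomial (Finsupp.single 2 1) (-(N : ℂ)) * pderiv 0 (pderiv 1 F)
  + monomial (Finsupp.single 0 1 + Finsupp.single 2 1) 1 * pderiv 2 (pderiv 0 F)
  + monomial (Finsupp.single 0 1 + Finsupp.single 2 1) 1 * pderiv 0 (pderiv 2 F)
  + monomial (Finsupp.single 1 1 + Finsupp.single 2 1) ((N : ℂ) - 1) * pderiv 2 (pderiv 1 F)
  + monomial (Finsupp.single 1 1 + Finsupp.single 2 1) ((N : ℂ) - 1) * pderiv 1 (pderiv 2 F)
  + monomial (Finsupp.single 2 1 + Finsupp.single 2 1) (N : ℂ) * pderiv 2 (pderiv 2 F)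
  + monomial (Finsupp.single 0 1) (((2 * a : ℝ) : ℂ) * 2) * pderiv 0 F
  + monomial (Finsupp.single 1 1) (((2 * a : ℝ) : ℂ) * (N : ℂ)) * pderiv 1 F
  + monomial (Finsupp.single 2 1) (((2 * a : ℝ) : ℂ) * (N : ℂ)) * pderiv 2 F

lemma wsum_single0 : wsum N (Finsupp.single 0 1) = 1 := by
  simp [wsum, Finsupp.single_apply]
lemma wsum_single1 : wsum N (Finsupp.single 1 1) = N - 1 := by
  simp [wsum, Finsupp.single_apply]
lemma wsum_single2 : wsum N (Finsupp.single 2 1) = N := by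
  simp [wsum, Finsupp.single_apply]

section wb
variable {n : ℕ} {F : MvPolynomial (Fin 3) ℂ}

lemma wb_add {P Q : MvPolynomial (Fin 3) ℂ}
    (hP : ∀ d ∈ P.support, wsum N d ≤ n) (hQ : ∀ d ∈ Q.support, wsum N d ≤ n) :
    ∀ d ∈ (P + Q).support, wsum N d ≤ n := by
  classical
  intro d hd
  rcases Finset.mem_union.mp (support_add hd) with h | h
  · exact hP d h
  · exact hQ d h

lemma mem_monomial_mul {u d : Fin 3 →₀ ℕ} {c : ℂ} {P : MvPolynomial (Fin 3) ℂ}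
    (hd : d ∈ (monomial u c * P).support) : ∃ z ∈ P.support, d = u + z := by
  classical
  obtain ⟨y, hy, z, hz, hyz⟩ := Finset.mem_add.mp (support_mul _ _ hd)
  rw [support_monomial] at hy
  have hyu : y = u := by
    by_cases hc : c = 0
    · rw [if_pos hc] at hy; exact absurd hy (Finset.notMem_empty y)
    · rw [if_neg hc] at hy; exact Finset.mem_singleton.mp hy
  exact ⟨z, hz, by rw [← hyz, hyu]⟩

lemma wb_MDD (hF : ∀ d ∈ F.support, wsum N d ≤ n) (u : Fin 3 →₀ ℕ) (c : ℂ) (j k : Fin 3)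
    (hu : wsum N u = wsum N (Finsupp.single j 1) + wsum N (Finsupp.single k 1)) :
    ∀ d ∈ (monomial u c * pderiv j (pderiv k F)).support, wsum N d ≤ n := by
  intro d hd
  obtain ⟨z, hz, rfl⟩ := mem_monomial_mul hd
  have h1 := mem_support_pderiv (mem_support_pderiv hz)
  have h2 := hF _ h1
  rw [wsum_add, wsum_add] at h2
  rw [wsum_add, hu]
  omega

lemma wb_MD (hF : ∀ d ∈ F.support, wsum N d ≤ n) (u : Fin 3 →₀ ℕ) (c : ℂ) (j : Fin 3)
    (hu : wsum N u = wsum N (Finsupp.single j 1)) :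
    ∀ d ∈ (monomial u c * pderiv j F).support, wsum N d ≤ n := by
  intro d hd
  obtain ⟨z, hz, rfl⟩ := mem_monomial_mul hd
  have h2 := hF _ (mem_support_pderiv hz)
  rw [wsum_add] at h2
  rw [wsum_add, hu]
  omega

lemma wb_LL (hN : 1 ≤ N) (a : ℝ) (hF : ∀ d ∈ F.support, wsum N d ≤ n) :
    ∀ d ∈ (LL N a F).support, wsum N d ≤ n := by
  unfold LL
  refine wb_add (wb_add (wb_add (wb_add (wb_add (wb_add (wb_add (wb_add (wb_add (wb_add
    (wb_add ?_ ?_) ?_) ?_) ?_) ?_) ?_) ?_) ?_) ?_) ?_) ?_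
  · exact wb_MDD hF _ _ 1 0 (by simp only [wsum_add, wsum_single0, wsum_single1] <;> omega)
  · exact wb_MDD hF _ _ 0 1 (by simp only [wsum_add, wsum_single0, wsum_single1] <;> omega)
  · exact wb_MDD hF _ _ 1 0 (by simp only [wsum_add, wsum_single0, wsum_single1, wsum_single2] <;> omega)
  · exact wb_MDD hF _ _ 0 1 (by simp only [wsum_add, wsum_single0, wsum_single1, wsum_single2] <;> omega)
  · exact wb_MDD hF _ _ 2 0 (by simp only [wsum_add, wsum_single0, wsum_single2] <;> omega)
  · exact wb_MDD hF _ _ 0 2 (by simp only [wsum_add, wsum_single0, wsum_single2] <;> omega)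
  · exact wb_MDD hF _ _ 2 1 (by simp only [wsum_add, wsum_single1, wsum_single2] <;> omega)
  · exact wb_MDD hF _ _ 1 2 (by simp only [wsum_add, wsum_single1, wsum_single2] <;> omega)
  · exact wb_MDD hF _ _ 2 2 (by simp only [wsum_add, wsum_single2] <;> omega)
  · exact wb_MD hF _ _ 0 (by simp only [wsum_single0])
  · exact wb_MD hF _ _ 1 (by simp only [wsum_single1])
  · exact wb_MD hF _ _ 2 (by simp only [wsum_single2])

lemma wb_totalDegree {P : MvPolynomial (Fin 3) ℂ}
    (h : ∀ d ∈ P.support, wsum N d ≤ n) :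
    (aeval (vN N) P).totalDegree ≤ n := by
  conv_lhs => rw [← support_sum_monomial_coeff P]
  rw [map_sum]
  refine le_trans (totalDegree_finset_sum _ _) (Finset.sup_le fun d hd => ?_)
  exact le_trans (tdeg_mono d _) (h d hd)

end wb

section dg
variable {F : MvPolynomial (Fin 3) ℂ}

lemma dg_add {k : Fin 3} {P Q : MvPolynomial (Fin 3) ℂ}
    (hP : degreeOf k P ≤ 1) (hQ : degreeOf k Q ≤ 1) : degreeOf k (P + Q) ≤ 1 :=
  le_trans (degreeOf_add_le _ _ _) (max_le hP hQ)

lemma dg_monomial_le (k : Fin 3) (u : Fin 3 →₀ ℕ) (c : ℂ) :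
    degreeOf k (monomial u c : MvPolynomial (Fin 3) ℂ) ≤ u k := by
  classical
  rw [degreeOf_le_iff]
  intro m hm
  rw [support_monomial] at hm
  by_cases hc : c = 0
  · rw [if_pos hc] at hm; exact absurd hm (Finset.notMem_empty m)
  · rw [if_neg hc] at hm; rw [Finset.mem_singleton.mp hm]

lemma dg_term {k : Fin 3} {u : Fin 3 →₀ ℕ} {c : ℂ} {D : MvPolynomial (Fin 3) ℂ}
    (h : u k + degreeOf k D ≤ 1) : degreeOf k (monomial u c * D) ≤ 1 :=
  le_trans (degreeOf_mul_le _ _ _) (le_trans (add_le_add_left (dg_monomial_le k u c) _) h)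

lemma dg_LL (a : ℝ) (hF0 : F.degreeOf 0 ≤ 1) (hF1 : F.degreeOf 1 ≤ 1) (k : Fin 3)
    (hk : k = 0 ∨ k = 1) : degreeOf k (LL N a F) ≤ 1 := by
  have key : ∀ j : Fin 3, degreeOf k (pderiv j F) ≤ 1 := fun j =>
    le_trans (degreeOf_pderiv_le j k F) (by rcases hk with rfl | rfl <;> assumption)
  have key0 : degreeOf k (pderiv k F) = 0 :=
    degreeOf_pderiv_self (by rcases hk with rfl | rfl <;> assumption)
  have keyD : ∀ j l : Fin 3, degreeOf k (pderiv j (pderiv l F)) ≤ 1 := fun j l =>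
    le_trans (degreeOf_pderiv_le j k _) (le_trans (degreeOf_pderiv_le l k F)
      (by rcases hk with rfl | rfl <;> assumption))
  have keyD0 : ∀ j : Fin 3, degreeOf k (pderiv j (pderiv k F)) = 0 := fun j =>
    Nat.le_zero.mp (le_trans (degreeOf_pderiv_le j k _) (le_of_eq key0))
  have keyD0' : ∀ l : Fin 3, degreeOf k (pderiv k (pderiv l F)) = 0 := fun l =>
    degreeOf_pderiv_self (le_trans (degreeOf_pderiv_le l k F)
      (by rcases hk with rfl | rfl <;> assumption))
  unfold LL
  refine dg_add (dg_add (dg_add (dg_add (dg_add (dg_add (dg_add (dg_add (dg_add (dg_add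
    (dg_add ?_ ?_) ?_) ?_) ?_) ?_) ?_) ?_) ?_) ?_) ?_) ?_ <;>
    refine dg_term ?_
  · rcases hk with rfl | rfl
    · rw [keyD0 1]; simp [Finsupp.add_apply, Finsupp.single_apply]
    · rw [keyD0' 0]; simp [Finsupp.add_apply, Finsupp.single_apply]
  · rcases hk with rfl | rfl
    · rw [keyD0' 1]; simp [Finsupp.add_apply, Finsupp.single_apply]
    · rw [keyD0 0]; simp [Finsupp.add_apply, Finsupp.single_apply]
  · rcases hk with rfl | rfl
    · rw [keyD0 1]; simp [Finsupp.single_apply]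
    · rw [keyD0' 0]; simp [Finsupp.single_apply]
  · rcases hk with rfl | rfl
    · rw [keyD0' 1]; simp [Finsupp.single_apply]
    · rw [keyD0 0]; simp [Finsupp.single_apply]
  · rcases hk with rfl | rfl
    · rw [keyD0 2]; simp [Finsupp.add_apply, Finsupp.single_apply]
    · refine le_trans (add_le_add_right (keyD 2 0) _) ?_
      simp [Finsupp.add_apply, Finsupp.single_apply]
  · rcases hk with rfl | rfl
    · rw [keyD0' 2]; simp [Finsupp.add_apply, Finsupp.single_apply]
    · refine le_trans (add_le_add_right (keyD 0 2) _) ?_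
      simp [Finsupp.add_apply, Finsupp.single_apply]
  · rcases hk with rfl | rfl
    · refine le_trans (add_le_add_right (keyD 2 1) _) ?_
      simp [Finsupp.add_apply, Finsupp.single_apply]
    · rw [keyD0 2]; simp [Finsupp.add_apply, Finsupp.single_apply]
  · rcases hk with rfl | rfl
    · refine le_trans (add_le_add_right (keyD 1 2) _) ?_
      simp [Finsupp.add_apply, Finsupp.single_apply]
    · rw [keyD0' 2]; simp [Finsupp.add_apply, Finsupp.single_apply]
  · refine le_trans (add_le_add_right (keyD 2 2) _) ?_
    rcases hk with rfl | rfl <;> simp [Finsupp.add_apply, Finsupp.single_apply]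
  · rcases hk with rfl | rfl
    · rw [key0]; simp [Finsupp.single_apply]
    · refine le_trans (add_le_add_right (key 0) _) ?_
      simp [Finsupp.single_apply]
  · rcases hk with rfl | rfl
    · refine le_trans (add_le_add_right (key 1) _) ?_
      simp [Finsupp.single_apply]
    · rw [key0]; simp [Finsupp.single_apply]
  · refine le_trans (add_le_add_right (key 2) _) ?_
    rcases hk with rfl | rfl <;> simp [Finsupp.single_apply]

end dg

lemma aevalLL (a : ℝ) (F : MvPolynomial (Fin 3) ℂ) :
    aeval (vN N) (LL N a F) =
      ((Dv N F 0 1 + Dv N F 1 0) * (sig N 1 * tauSub N - C (N : ℂ) * tauTop N)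
       + (Dv N F 0 2 + Dv N F 2 0) * (sig N 1 * tauTop N)
       + (Dv N F 1 2 + Dv N F 2 1) * ((C (N : ℂ) - 1) * tauSub N * tauTop N)
       + Dv N F 2 2 * (C (N : ℂ) * tauTop N ^ 2))
      + C ((2 * a : ℝ) : ℂ) * (2 * sig N 1 * Pv N F 0 + C (N : ℂ) * tauSub N * Pv N F 1
          + C (N : ℂ) * tauTop N * Pv N F 2) := by
  have hC : ∀ c : ℂ, algebraMap ℂ (MvP N) c = C c := fun c => rfl
  unfold LL Dv Pv
  simp only [map_add, map_mul, aeval_monomial, Finsupp.prod_pow, Fin.prod_univ_three,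
    Finsupp.add_apply, Finsupp.single_apply, hC]
  norm_num
  rw [show (vN N) 0 = sig N 1 from rfl, show (vN N) 1 = tauSub N from rfl,
    show (vN N) 2 = tauTop N from rfl]
  push_cast [map_mul, map_sub, map_neg, map_natCast, map_one, map_ofNat]
  ring

theorem mainId (hN : 3 ≤ N) (a : ℝ) (F : MvPolynomial (Fin 3) ℂ)
    (hF0 : F.degreeOf 0 ≤ 1) (hF1 : F.degreeOf 1 ≤ 1) :
    T2op N a (aeval (vN N) F) = phi N (aeval (vN N) (LL N a F)) := by
  unfold T2op
  have hsym : ∀ i : Fin N,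
      aeval (vN N) F - rename (Equiv.swap i (i + 1)) (aeval (vN N) F) = 0 := fun i => by
    rw [rename_aeval3]; exact sub_self _
  have h3 : (∑ i : Fin N, phi N (X i * X (i + 1)) * ((phi N (X i - X (i + 1)))⁻¹) ^ 2 *
      phi N (aeval (vN N) F - rename (Equiv.swap i (i + 1)) (aeval (vN N) F))) = 0 := by
    refine Finset.sum_eq_zero fun i _ => ?_
    rw [hsym i, map_zero, mul_zero]
  rw [h3, mul_zero, sub_zero]
  have hmid : ∀ i : Fin N,
      (phi N (X i - X (i + 1)))⁻¹ *
        phi N (X i ^ 2 * pderiv i (aeval (vN N) F)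
          - X (i + 1) ^ 2 * pderiv (i + 1) (aeval (vN N) F)) = phi N (Rmid N F i (i + 1)) := by
    intro i
    rw [midI2 F i (i + 1), map_mul, inv_mul_cancel_left₀]
    exact fun h => X_sub_X_ne hN i
      ((IsFractionRing.to_map_eq_zero_iff (K := FractionRing (MvP N))).mp h)
  rw [Finset.sum_congr rfl fun i _ => hmid i, ← map_sum, ← map_sum, sumI3, sumI1 F hF0 hF1,
    ← map_mul, ← map_add, aevalLL]


end Stmt5Aux

theorem stmt_5 (N : ℕ) [NeZero N] (hN : 3 ≤ N) (a : ℝ) (n : ℕ) (f : MvP N)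
    (hf : S2mem N n f) :
    ∃ g : MvP N, S2mem N n g ∧ phi N g = T2op N a f := by
  obtain ⟨hdeg, F, hF0, hF1, hfF⟩ := hf
  have hfF' : f = aeval (Stmt5Aux.vN N) F := hfF
  obtain ⟨F', hF'aeval, hF'supp, hF'w⟩ := Stmt5Aux.decompose n F (by rw [← hfF']; exact hdeg)
  have hF'0 : F'.degreeOf 0 ≤ 1 := by
    rw [degreeOf_eq_sup] at hF0 ⊢
    exact le_trans (Finset.sup_mono hF'supp) hF0
  have hF'1 : F'.degreeOf 1 ≤ 1 := by
    rw [degreeOf_eq_sup] at hF1 ⊢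
    exact le_trans (Finset.sup_mono hF'supp) hF1
  refine ⟨aeval (Stmt5Aux.vN N) (Stmt5Aux.LL N a F'), ⟨?_, Stmt5Aux.LL N a F', ?_, ?_, rfl⟩, ?_⟩
  · exact Stmt5Aux.wb_totalDegree (Stmt5Aux.wb_LL (by omega) a hF'w)
  · exact Stmt5Aux.dg_LL a hF'0 hF'1 0 (Or.inl rfl)
  · exact Stmt5Aux.dg_LL a hF'0 hF'1 1 (Or.inr rfl)
  · have : f = aeval (Stmt5Aux.vN N) F' := by rw [hfF', hF'aeval]
    rw [this, Stmt5Aux.mainId hN a F' hF'0 hF'1]
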